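/- arXiv:1103.4014 — 2 statements merged into one kernel-verified Lean document; each statement's English description precedes it below -/
import Mathlib

section
/- If T satisfies T''(x) + (2(2a-1)x/(1-x^2)) T'(x) + ((k+1)(2a+k)/(1-x^2)) T(x) = 0 on (-1,1) with a ≥ 1/2 and k ≥ 0, then the function S(x) = T(x)^2 + (1-x^2) T'(x)^2 / ((k+1)(2a+k)) attains its maximum on (-1,1) at x = 0; in particular S(x) ≤ S(0) for all x in (-1,1). -/
/-!
Writing `c = (k+1)(2a+k)` and `b = 2(2a-1)`, the equation reads
`(1-x²) T'' + b x T' + c T = 0`, and substituting it into the derivative of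
`S = T² + (1-x²) T'² / c` gives `S' = -2(1+b)/c · x T'²`.
Since `1 + b = 4a - 1 > 0` and `c > 0`, `S` increases on `(-1,0]` and decreases on `[0,1)`.
-/

open Set

theorem isMaxOn_of_hasDerivAt_of_sub_mul_nonpos {f f' : ℝ → ℝ} {s : Set ℝ} {x₀ : ℝ}
    (hs : s.OrdConnected) (hx₀ : x₀ ∈ s) (hf : ∀ x ∈ s, HasDerivAt f (f' x) x)
    (hsign : ∀ x ∈ s, (x - x₀) * f' x ≤ 0) : IsMaxOn f s x₀ := by
  intro x hx
  have hcont : ∀ {u v}, u ∈ s → v ∈ s → ContinuousOn f (Icc u v) := fun hu hv y hy =>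
    (hf y (hs.out hu hv hy)).continuousAt.continuousWithinAt
  have hderiv : ∀ {u v}, u ∈ s → v ∈ s →
      ∀ y ∈ interior (Icc u v), HasDerivWithinAt f (f' y) (interior (Icc u v)) y :=
    fun hu hv y hy => (hf y (hs.out hu hv (interior_subset hy))).hasDerivWithinAt
  rcases le_total x x₀ with hle | hle
  · refine monotoneOn_of_hasDerivWithinAt_nonneg (convex_Icc x x₀) (hcont hx hx₀)
      (hderiv hx hx₀) (fun y hy => ?_) (left_mem_Icc.2 hle) (right_mem_Icc.2 hle) hle
    rw [interior_Icc] at hy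
    exact nonneg_of_mul_nonpos_right (hsign y (hs.out hx hx₀ (Ioo_subset_Icc_self hy)))
      (sub_neg.2 hy.2)
  · refine antitoneOn_of_hasDerivWithinAt_nonpos (convex_Icc x₀ x) (hcont hx₀ hx)
      (hderiv hx₀ hx) (fun y hy => ?_) (left_mem_Icc.2 hle) (right_mem_Icc.2 hle) hle
    rw [interior_Icc] at hy
    exact nonpos_of_mul_nonpos_right (hsign y (hs.out hx₀ hx (Ioo_subset_Icc_self hy)))
      (sub_pos.2 hy.1)

noncomputable def sonine (c : ℝ) (T T' : ℝ → ℝ) (x : ℝ) : ℝ :=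
  T x ^ 2 + (1 - x ^ 2) * T' x ^ 2 / c

theorem hasDerivAt_sonine {b c x : ℝ} {T T' T'' : ℝ → ℝ} (hc : c ≠ 0)
    (hT : HasDerivAt T (T' x) x) (hT' : HasDerivAt T' (T'' x) x)
    (hode : (1 - x ^ 2) * T'' x + b * x * T' x + c * T x = 0) :
    HasDerivAt (sonine c T T') (-(2 * (1 + b) / c) * (x * T' x ^ 2)) x := by
  have hweight : HasDerivAt (fun y : ℝ => 1 - y ^ 2) (-(2 * x)) x := by
    simpa using (hasDerivAt_pow 2 x).const_sub 1
  refine ((hT.pow 2).add ((hweight.mul (hT'.pow 2)).div_const c)).congr_deriv ?_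
  simp only [Pi.pow_apply, Nat.cast_ofNat, Nat.add_one_sub_one, pow_one]
  field_simp
  linear_combination T' x * hode

/-- **Maximum of the Sonine function at the origin.**
If `T'' + (2(2a-1)x/(1-x²)) T' + ((k+1)(2a+k)/(1-x²)) T = 0` on `(-1,1)` with
`a ≥ 1/2` and `k ≥ 0`, then
`S x = T x ^ 2 + (1-x²) (T' x)² / ((k+1)(2a+k))` attains its maximum on `(-1,1)`
at `x = 0`: `S x ≤ S 0` for all `x ∈ (-1,1)`. -/
theorem sonine_max_at_zero (a : ℝ) (ha : 1 / 2 ≤ a) (k : ℕ)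
    (hpos : 0 < ((k : ℝ) + 1) * (2 * a + k))
    (T T' T'' : ℝ → ℝ)
    (hT : ∀ x ∈ Ioo (-1 : ℝ) 1, HasDerivAt T (T' x) x)
    (hT' : ∀ x ∈ Ioo (-1 : ℝ) 1, HasDerivAt T' (T'' x) x)
    (hode : ∀ x ∈ Ioo (-1 : ℝ) 1,
      T'' x + (2 * (2 * a - 1) * x / (1 - x ^ 2)) * T' x
        + (((k : ℝ) + 1) * (2 * a + k) / (1 - x ^ 2)) * T x = 0) :
    ∀ x ∈ Ioo (-1 : ℝ) 1,
      T x ^ 2 + (1 - x ^ 2) * (T' x) ^ 2 / (((k : ℝ) + 1) * (2 * a + k))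
        ≤ T 0 ^ 2 + (1 - (0 : ℝ) ^ 2) * (T' 0) ^ 2 / (((k : ℝ) + 1) * (2 * a + k)) := by
  set c : ℝ := ((k : ℝ) + 1) * (2 * a + k)
  have hode_cleared : ∀ x ∈ Ioo (-1 : ℝ) 1,
      (1 - x ^ 2) * T'' x + 2 * (2 * a - 1) * x * T' x + c * T x = 0 := by
    intro x hx
    have hx2 : 1 - x ^ 2 ≠ 0 := by nlinarith [hx.1, hx.2]
    have h := hode x hx
    field_simp at h
    linear_combination h
  have hderiv : ∀ x ∈ Ioo (-1 : ℝ) 1, HasDerivAt (sonine c T T')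
      (-(2 * (1 + 2 * (2 * a - 1)) / c) * (x * T' x ^ 2)) x := fun x hx =>
    hasDerivAt_sonine hpos.ne' (hT x hx) (hT' x hx) (hode_cleared x hx)
  have hrate : 0 ≤ 2 * (1 + 2 * (2 * a - 1)) / c := div_nonneg (by linarith) hpos.le
  have hmax : IsMaxOn (sonine c T T') (Ioo (-1 : ℝ) 1) 0 :=
    isMaxOn_of_hasDerivAt_of_sub_mul_nonpos ordConnected_Ioo (by norm_num) hderiv
      fun x _ => by nlinarith [mul_nonneg hrate (sq_nonneg (x * T' x))]
  exact hmax
end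

section
/- Let n ≥ 4 and define Q_k(x) = ∂_x^k((1-x^2)^{k+(n-3)/2}) / (2^k Γ(k+(n-1)/2)) for integer k ≥ 1. Then there is a constant C (independent of k and x) such that |Q_k(x)| ≤ C k^{1-n/2} for all x in [-1,1]. -/
/-!
Write `c = k + α` with `α = (n - 3) / 2` and `v = ∂ᵏ (1 - x²)ᶜ`. Differentiating
`(1 - x²) f' + 2 c x f = 0` repeatedly shows that `v` solves
`(1 - x²) v'' + 2 (α - 1) x v' + (k + 1)(k + 2α) v = 0`. For `α ≥ 1/2`, i.e. `n ≥ 4`, the Sonine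
function `v² + (1 - x²) v'² / ((k + 1)(k + 2α))` decreases in `|x|`, so `|v|` is bounded by
`v(0)` and `v'(0)`. At `x = 0` the equation becomes a two-term recursion for the derivatives of
`(1 - x²)ᶜ`, so one of `v(0)`, `v'(0)` vanishes and the other is an explicit quotient of Gamma
values. After dividing by `2ᵏ Γ(k + α + 1)` what remains is `Γ(y) / Γ(y + δ)` with
`y = ⌊k/2⌋ + 1/2` and `δ = α + 1/2 = n/2 - 1`, and log-convexity of `Γ` gives
`Γ(y) y^δ ≤ 2 Γ(y + δ)`, whence the factor `k^(-δ)`.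
-/

open Set

theorem le_apply_zero_of_mul_deriv_nonpos {s : Set ℝ} (hs : s.OrdConnected) {S S' : ℝ → ℝ}
    (hS : ∀ y ∈ s, HasDerivAt S (S' y) y) (hsign : ∀ y ∈ s, y * S' y ≤ 0)
    (h0 : (0 : ℝ) ∈ s) {x : ℝ} (hx : x ∈ s) : S x ≤ S 0 := by
  have hcont {a b : ℝ} (ha : a ∈ s) (hb : b ∈ s) : ContinuousOn S (Icc a b) := fun y hy =>
    (hS y (hs.out ha hb hy)).continuousAt.continuousWithinAt
  have hderiv {a b : ℝ} (ha : a ∈ s) (hb : b ∈ s) : ∀ y ∈ Ioo a b, HasDerivAt S (S' y) y :=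
    fun y hy => hS y (hs.out ha hb (Ioo_subset_Icc_self hy))
  rcases lt_trichotomy x 0 with hneg | rfl | hpos
  · obtain ⟨ξ, hξ, hslope⟩ := exists_hasDerivAt_eq_slope S S' hneg (hcont hx h0) (hderiv hx h0)
    have hS'ξ : 0 ≤ S' ξ :=
      nonneg_of_mul_nonpos_right (hsign ξ (hs.out hx h0 (Ioo_subset_Icc_self hξ))) hξ.2
    rw [hslope, le_div_iff₀ (by linarith)] at hS'ξ
    linarith
  · rfl
  · obtain ⟨ξ, hξ, hslope⟩ := exists_hasDerivAt_eq_slope S S' hpos (hcont h0 hx) (hderiv h0 hx)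
    have hS'ξ : S' ξ ≤ 0 :=
      nonpos_of_mul_nonpos_right (hsign ξ (hs.out h0 hx (Ioo_subset_Icc_self hξ))) hξ.1
    rw [hslope, div_le_iff₀ (by linarith)] at hS'ξ
    linarith

theorem sq_le_of_gegenbauer_ode {v v' v'' : ℝ → ℝ} {b l : ℝ} (hl : 0 < l) (hb : -1 ≤ b)
    (hv : ∀ y ∈ Ioo (-1 : ℝ) 1, HasDerivAt v (v' y) y)
    (hv' : ∀ y ∈ Ioo (-1 : ℝ) 1, HasDerivAt v' (v'' y) y)
    (hode : ∀ y ∈ Ioo (-1 : ℝ) 1, (1 - y ^ 2) * v'' y + b * y * v' y + l * v y = 0)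
    {x : ℝ} (hx : x ∈ Ioo (-1 : ℝ) 1) : v x ^ 2 ≤ v 0 ^ 2 + v' 0 ^ 2 / l := by
  set S : ℝ → ℝ := fun y => v y ^ 2 + (1 - y ^ 2) * v' y ^ 2 / l
  have hS : ∀ y ∈ Ioo (-1 : ℝ) 1, HasDerivAt S (-2 * (1 + b) * y * v' y ^ 2 / l) y := by
    intro y hy
    have h := ((hv y hy).pow 2).add
      (((((hasDerivAt_id y).pow 2).const_sub 1).mul ((hv' y hy).pow 2)).div_const l)
    refine h.congr_deriv ?_
    simp only [id, Pi.pow_apply]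
    field_simp
    linear_combination (2 * v' y) * hode y hy
  have hdecay : S x ≤ S 0 := by
    refine le_apply_zero_of_mul_deriv_nonpos ordConnected_Ioo hS (fun y _ => ?_) (by norm_num) hx
    have : 0 ≤ 2 * (1 + b) * y ^ 2 * v' y ^ 2 / l := by
      have : 0 ≤ 1 + b := by linarith
      positivity
    linarith [show y * (-2 * (1 + b) * y * v' y ^ 2 / l) = -(2 * (1 + b) * y ^ 2 * v' y ^ 2 / l)
      by ring]
  have hweight : 0 ≤ (1 - x ^ 2) * v' x ^ 2 / l := by
    have : 0 ≤ 1 - x ^ 2 := by nlinarith [hx.1, hx.2]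
    positivity
  simp only [S] at hdecay
  norm_num at hdecay
  linarith

theorem gegenbauer_relation_deriv {U : Set ℝ} (hU : IsOpen U) {g u₁ u₂ u₃ : ℝ → ℝ} {a b : ℝ}
    (hg : ∀ y ∈ U, HasDerivAt g (b * u₁ y) y)
    (hu₁ : ∀ y ∈ U, HasDerivAt u₁ (u₂ y) y)
    (hu₂ : ∀ y ∈ U, HasDerivAt u₂ (u₃ y) y)
    (hrel : ∀ y ∈ U, (1 - y ^ 2) * u₂ y + a * y * u₁ y + g y = 0) :
    ∀ y ∈ U, (1 - y ^ 2) * u₃ y + (a - 2) * y * u₂ y + (a + b) * u₁ y = 0 := by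
  intro y hy
  have hderiv := (((((hasDerivAt_id y).pow 2).const_sub 1).mul (hu₂ y hy)).add
    (((hasDerivAt_id y).const_mul a).mul (hu₁ y hy))).add (hg y hy)
  have hzero : HasDerivAt (fun y => (1 - y ^ 2) * u₂ y + a * y * u₁ y + g y) 0 y :=
    (hasDerivAt_const y (0 : ℝ)).congr_of_eventuallyEq
      (Filter.eventuallyEq_of_mem (hU.mem_nhds hy) hrel)
  have := hderiv.unique hzero
  simp only [id, Pi.pow_apply] at this
  linear_combination this

namespace Real

theorem Gamma_add_le_Gamma_mul_rpow {x s : ℝ} (hx : 0 < x) (hs₀ : 0 ≤ s) (hs₁ : s ≤ 1) :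
    Gamma (x + s) ≤ Gamma x * x ^ s := by
  have hΓx := Gamma_pos_of_pos hx
  have hlog := convexOn_log_Gamma.2 (mem_Ioi.2 hx) (mem_Ioi.2 (by linarith : 0 < x + 1))
    (sub_nonneg.2 hs₁) hs₀ (by ring)
  simp only [smul_eq_mul, Function.comp_apply, Gamma_add_one hx.ne',
    log_mul hx.ne' hΓx.ne', show (1 - s) * x + s * (x + 1) = x + s by ring] at hlog
  rw [← log_le_log_iff (Gamma_pos_of_pos (by linarith)) (by positivity),
    log_mul hΓx.ne' (by positivity), log_rpow hx]
  linarith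

theorem Gamma_mul_pow_le_Gamma_add_nat {b : ℝ} (hb : 0 < b) (q : ℕ) :
    Gamma b * b ^ q ≤ Gamma (b + q) := by
  induction q with
  | zero => simp
  | succ q ih =>
    have hbq : 0 < b + q := by positivity
    rw [Nat.cast_succ, ← add_assoc, Gamma_add_one hbq.ne', pow_succ]
    nlinarith [Gamma_pos_of_pos hbq, Gamma_pos_of_pos hb, pow_pos hb q]

theorem Gamma_mul_rpow_le_two_mul_Gamma_add_of_le_one {y s : ℝ} (hy : 1 / 4 ≤ y) (hs₀ : 0 ≤ s)
    (hs₁ : s ≤ 1) : Gamma y * y ^ s ≤ 2 * Gamma (y + s) := by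
  have hy₀ : 0 < y := by linarith
  have hΓ := Gamma_pos_of_pos (show 0 < y + s by linarith)
  have hstep : y * Gamma y ≤ Gamma (y + s) * (y + s) ^ (1 - s) := by
    simpa [← Gamma_add_one hy₀.ne', add_assoc] using
      Gamma_add_le_Gamma_mul_rpow (x := y + s) (by linarith) (sub_nonneg.2 hs₁) (by linarith)
  have hamgm : y ^ s * (y + s) ^ (1 - s) ≤ s * y + (1 - s) * (y + s) :=
    geom_mean_le_arith_mean2_weighted hs₀ (sub_nonneg.2 hs₁) hy₀.le (by linarith) (by ring)
  have : y * (Gamma y * y ^ s) ≤ y * (2 * Gamma (y + s)) := by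
    calc y * (Gamma y * y ^ s) = y * Gamma y * y ^ s := by ring
      _ ≤ Gamma (y + s) * (y ^ s * (y + s) ^ (1 - s)) := by
        nlinarith [rpow_nonneg hy₀.le s]
      _ ≤ Gamma (y + s) * (s * y + (1 - s) * (y + s)) := by gcongr
      _ ≤ Gamma (y + s) * (2 * y) := by gcongr; nlinarith [sq_nonneg (2 * s - 1)]
      _ = y * (2 * Gamma (y + s)) := by ring
  exact le_of_mul_le_mul_left this hy₀

theorem Gamma_mul_rpow_le_two_mul_Gamma_add {y δ : ℝ} (hy : 1 / 4 ≤ y) (hδ : 0 ≤ δ) :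
    Gamma y * y ^ δ ≤ 2 * Gamma (y + δ) := by
  set p := ⌊δ⌋₊
  set s := δ - p
  have hs₀ : 0 ≤ s := sub_nonneg.2 (Nat.floor_le hδ)
  have hs₁ : s ≤ 1 := by linarith [Nat.lt_floor_add_one δ]
  have hy₀ : 0 < y := by linarith
  calc Gamma y * y ^ δ = Gamma y * y ^ s * y ^ p := by
        rw [mul_assoc, ← rpow_natCast, ← rpow_add hy₀, sub_add_cancel]
    _ ≤ 2 * Gamma (y + s) * (y + s) ^ p :=
        mul_le_mul (Gamma_mul_rpow_le_two_mul_Gamma_add_of_le_one hy hs₀ hs₁)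
          (pow_le_pow_left₀ hy₀.le (by linarith) p) (by positivity) (by positivity)
    _ ≤ 2 * Gamma (y + δ) := by
        rw [mul_assoc, show y + δ = y + s + p by ring]
        gcongr
        exact Gamma_mul_pow_le_Gamma_add_nat (by linarith) p

end Real

open scoped ContDiff

theorem one_sub_sq_ne_zero_of_mem_Ioo {y : ℝ} (hy : y ∈ Ioo (-1 : ℝ) 1) : 1 - y ^ 2 ≠ 0 := by
  nlinarith [hy.1, hy.2]

noncomputable def oneSubSqRpow (c y : ℝ) : ℝ := (1 - y ^ 2) ^ c

namespace oneSubSqRpow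

open Real

variable (c : ℝ)

theorem hasDerivAt {y : ℝ} (hy : y ∈ Ioo (-1 : ℝ) 1) :
    HasDerivAt (oneSubSqRpow c) (-2 * y * c * (1 - y ^ 2) ^ (c - 1)) y := by
  have h := (((hasDerivAt_id y).pow 2).const_sub 1).rpow_const (p := c)
    (Or.inl (one_sub_sq_ne_zero_of_mem_Ioo hy))
  refine h.congr_deriv ?_
  simp only [id, Pi.pow_apply]
  ring

theorem contDiffOn : ContDiffOn ℝ ∞ (oneSubSqRpow c) (Ioo (-1) 1) := fun _ hy =>
  ((contDiff_const.sub (contDiff_id.pow 2)).contDiffAt.rpow_const_of_ne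
    (one_sub_sq_ne_zero_of_mem_Ioo hy)).contDiffWithinAt

theorem hasDerivAt_iteratedDeriv (j : ℕ) {y : ℝ} (hy : y ∈ Ioo (-1 : ℝ) 1) :
    HasDerivAt (iteratedDeriv j (oneSubSqRpow c)) (iteratedDeriv (j + 1) (oneSubSqRpow c) y) y := by
  have hsmooth : ContDiffOn ℝ ∞ (iteratedDeriv j (oneSubSqRpow c)) (Ioo (-1) 1) := by
    induction j with
    | zero => simpa only [iteratedDeriv_zero] using contDiffOn c
    | succ j ih =>
      rw [iteratedDeriv_succ]
      exact ((contDiffOn_infty_iff_deriv_of_isOpen isOpen_Ioo).1 ih).2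
  rw [iteratedDeriv_succ]
  exact (((contDiffOn_infty_iff_deriv_of_isOpen isOpen_Ioo).1 hsmooth).1.differentiableAt
    (isOpen_Ioo.mem_nhds hy)).hasDerivAt

theorem continuous_iteratedDeriv {k : ℕ} (hk : (k : ℝ) ≤ c) :
    Continuous (iteratedDeriv k (oneSubSqRpow c)) :=
  ((contDiff_rpow_const_of_le hk).comp (contDiff_const.sub (contDiff_id.pow 2))
    ).continuous_iteratedDeriv k le_rfl

theorem ode (m : ℕ) : ∀ y ∈ Ioo (-1 : ℝ) 1,
    (1 - y ^ 2) * iteratedDeriv (m + 2) (oneSubSqRpow c) y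
      + 2 * (c - (m + 1)) * y * iteratedDeriv (m + 1) (oneSubSqRpow c) y
      + (m + 1) * (2 * c - m) * iteratedDeriv m (oneSubSqRpow c) y = 0 := by
  have hD (j : ℕ) := fun y (hy : y ∈ Ioo (-1 : ℝ) 1) => hasDerivAt_iteratedDeriv c j hy
  induction m with
  | zero =>
    -- the first-order equation, padded with `g = 0` to fit `gegenbauer_relation_deriv`
    have hfirst : ∀ y ∈ Ioo (-1 : ℝ) 1, (1 - y ^ 2) * iteratedDeriv 1 (oneSubSqRpow c) y
        + 2 * c * y * iteratedDeriv 0 (oneSubSqRpow c) y + 0 = 0 := by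
      intro y hy
      rw [iteratedDeriv_one, (hasDerivAt c hy).deriv, iteratedDeriv_zero, oneSubSqRpow,
        rpow_sub_one (one_sub_sq_ne_zero_of_mem_Ioo hy)]
      field_simp [one_sub_sq_ne_zero_of_mem_Ioo hy]
      ring
    convert gegenbauer_relation_deriv isOpen_Ioo (b := 0)
      (fun y _ => by simpa using hasDerivAt_const y (0 : ℝ)) (hD 0) (hD 1) hfirst using 4 <;> ring
  | succ m ih =>
    convert gegenbauer_relation_deriv isOpen_Ioo (fun y hy => (hD m y hy).const_mul _)
      (hD (m + 1)) (hD (m + 2)) ih using 4 <;> push_cast <;> ring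

theorem iteratedDeriv_add_two_zero (m : ℕ) :
    iteratedDeriv (m + 2) (oneSubSqRpow c) 0
      = -((m + 1) * (2 * c - m)) * iteratedDeriv m (oneSubSqRpow c) 0 := by
  linear_combination ode c m 0 (by norm_num)

theorem iteratedDeriv_odd_zero (j : ℕ) : iteratedDeriv (2 * j + 1) (oneSubSqRpow c) 0 = 0 := by
  induction j with
  | zero => simpa [iteratedDeriv_one] using (hasDerivAt c (y := 0) (by norm_num)).deriv
  | succ j ih => rw [show 2 * (j + 1) + 1 = 2 * j + 1 + 2 by ring, iteratedDeriv_add_two_zero, ih,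
      mul_zero]

theorem iteratedDeriv_even_zero_mul_Gamma (j : ℕ) (hj : (j : ℝ) < c + 1) :
    iteratedDeriv (2 * j) (oneSubSqRpow c) 0 * Gamma (1 / 2) * Gamma (c + 1 - j)
      = (-4) ^ j * Gamma (j + 1 / 2) * Gamma (c + 1) := by
  induction j with
  | zero => simp [oneSubSqRpow]
  | succ j ih =>
    push_cast at hj ⊢
    have hcj : c - j ≠ 0 := by linarith
    rw [show 2 * (j + 1) = 2 * j + 2 by ring, iteratedDeriv_add_two_zero,
      show c + 1 - (j + 1) = c - j by ring, show (j : ℝ) + 1 + 1 / 2 = j + 1 / 2 + 1 by ring,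
      Gamma_add_one (by positivity)]
    have := ih (by linarith)
    rw [show c + 1 - j = c - j + 1 by ring, Gamma_add_one hcj] at this
    push_cast
    linear_combination (-2 * (2 * (j : ℝ) + 1)) * this

theorem sq_iteratedDeriv_le {k : ℕ} (hc : k + 1 / 2 ≤ c) {x : ℝ} (hx : x ∈ Ioo (-1 : ℝ) 1) :
    iteratedDeriv k (oneSubSqRpow c) x ^ 2 ≤ iteratedDeriv k (oneSubSqRpow c) 0 ^ 2
      + iteratedDeriv (k + 1) (oneSubSqRpow c) 0 ^ 2 / ((k + 1) * (2 * c - k)) :=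
  sq_le_of_gegenbauer_ode (b := 2 * (c - (k + 1))) (by nlinarith) (by linarith)
    (fun _ hy => hasDerivAt_iteratedDeriv c k hy)
    (fun _ hy => hasDerivAt_iteratedDeriv c (k + 1) hy) (ode c k) hx

theorem abs_iteratedDeriv_even_mul_Gamma_le (m : ℕ) {α : ℝ} (hα : 1 / 2 ≤ α) {x : ℝ}
    (hx : x ∈ Ioo (-1 : ℝ) 1) :
    |iteratedDeriv (2 * m) (oneSubSqRpow (↑(2 * m) + α)) x| * Gamma (1 / 2)
        * Gamma (m + 1 / 2 + (α + 1 / 2))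
      ≤ 2 ^ (2 * m) * Gamma (m + 1 / 2) * Gamma (↑(2 * m) + α + 1) := by
  set c : ℝ := ↑(2 * m) + α
  have hcm : c + 1 - m = m + 1 / 2 + (α + 1 / 2) := by push_cast [c]; ring
  have hval := iteratedDeriv_even_zero_mul_Gamma c m (by push_cast [c]; linarith)
  rw [hcm] at hval
  have hson := sq_iteratedDeriv_le c (k := 2 * m) (by push_cast [c]; linarith) hx
  rw [iteratedDeriv_odd_zero, zero_pow two_ne_zero, zero_div, add_zero, sq_le_sq] at hson
  have hΓ₁ : 0 < Gamma (1 / 2) := Gamma_pos_of_pos (by norm_num)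
  have hΓ₂ : 0 < Gamma (m + 1 / 2 + (α + 1 / 2)) := Gamma_pos_of_pos (by positivity)
  have hΓ₃ : 0 < Gamma (m + 1 / 2) := Gamma_pos_of_pos (by positivity)
  have hΓ₄ : 0 < Gamma (c + 1) := Gamma_pos_of_pos (by positivity)
  calc _ ≤ |iteratedDeriv (2 * m) (oneSubSqRpow c) 0| * Gamma (1 / 2)
          * Gamma (m + 1 / 2 + (α + 1 / 2)) := by gcongr
    _ = |(-4) ^ m * Gamma (m + 1 / 2) * Gamma (c + 1)| := by
        rw [← hval, abs_mul, abs_mul, abs_of_pos hΓ₁, abs_of_pos hΓ₂]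
    _ = _ := by
        rw [abs_mul, abs_mul, abs_pow, abs_neg, abs_of_pos hΓ₃, abs_of_pos hΓ₄, pow_mul]
        norm_num

theorem abs_iteratedDeriv_odd_mul_Gamma_le (m : ℕ) {α : ℝ} (hα : 1 / 2 ≤ α) {x : ℝ}
    (hx : x ∈ Ioo (-1 : ℝ) 1) :
    |iteratedDeriv (2 * m + 1) (oneSubSqRpow (↑(2 * m + 1) + α)) x| * Gamma (1 / 2)
        * Gamma (m + 1 / 2 + (α + 1 / 2))
      ≤ 2 ^ (2 * m + 1) * Gamma (m + 1 / 2) * Gamma (↑(2 * m + 1) + α + 1) := by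
  set c : ℝ := ↑(2 * m + 1) + α
  set v := iteratedDeriv (2 * m + 1) (oneSubSqRpow c)
  set w := iteratedDeriv (2 * (m + 1)) (oneSubSqRpow c)
  have hΓ₁ : 0 < Gamma (1 / 2) := Gamma_pos_of_pos (by norm_num)
  have hΓ₂ : 0 < Gamma (m + 1 / 2 + (α + 1 / 2)) := Gamma_pos_of_pos (by positivity)
  have hΓ₃ : 0 < Gamma (m + 1 / 2) := Gamma_pos_of_pos (by positivity)
  have hΓ₄ : 0 < Gamma (c + 1) := Gamma_pos_of_pos (by positivity)
  have hval : |w 0| * Gamma (1 / 2) * Gamma (m + 1 / 2 + (α + 1 / 2))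
      = 2 ^ (2 * m + 1) * (2 * m + 1) * Gamma (m + 1 / 2) * Gamma (c + 1) := by
    have h := iteratedDeriv_even_zero_mul_Gamma c (m + 1) (by push_cast [c]; linarith)
    rw [show c + 1 - ↑(m + 1) = m + 1 / 2 + (α + 1 / 2) by push_cast [c]; ring,
      show ((m + 1 : ℕ) : ℝ) + 1 / 2 = m + 1 / 2 + 1 by push_cast; ring,
      Gamma_add_one (by positivity)] at h
    rw [← abs_of_pos hΓ₁, ← abs_of_pos hΓ₂, ← abs_mul, ← abs_mul, h, abs_mul, abs_mul, abs_mul,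
      abs_pow, abs_neg, abs_of_pos hΓ₃, abs_of_pos hΓ₄,
      abs_of_pos (by positivity : (0 : ℝ) < m + 1 / 2), pow_succ 2, pow_mul]
    ring
  have hson : v x ^ 2 ≤ w 0 ^ 2 / (2 * m + 2) ^ 2 := by
    have h := sq_iteratedDeriv_le c (k := 2 * m + 1) (by push_cast [c]; linarith) hx
    rw [iteratedDeriv_odd_zero, zero_pow two_ne_zero, zero_add,
      show 2 * m + 1 + 1 = 2 * (m + 1) by ring] at h
    refine h.trans (div_le_div_of_nonneg_left (sq_nonneg _) (by positivity) ?_)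
    push_cast [c]
    nlinarith
  have hvw : |v x| * (2 * m + 2) ≤ |w 0| := by
    rw [le_div_iff₀ (by positivity), ← mul_pow, sq_le_sq, abs_mul,
      abs_of_pos (by positivity : (0 : ℝ) < 2 * m + 2)] at hson
    exact hson
  refine le_of_mul_le_mul_right ?_ (by positivity : (0 : ℝ) < 2 * m + 2)
  calc |v x| * Gamma (1 / 2) * Gamma (m + 1 / 2 + (α + 1 / 2)) * (2 * m + 2)
      ≤ |w 0| * Gamma (1 / 2) * Gamma (m + 1 / 2 + (α + 1 / 2)) := by
        rw [mul_right_comm, mul_right_comm _ (Gamma _)]; gcongr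
    _ ≤ _ := by
        rw [hval]
        nlinarith [mul_pos (pow_pos two_pos (2 * m + 1)) (mul_pos hΓ₃ hΓ₄)]

theorem abs_iteratedDeriv_mul_Gamma_le (k : ℕ) {α : ℝ} (hα : 1 / 2 ≤ α) {x : ℝ}
    (hx : x ∈ Icc (-1 : ℝ) 1) :
    |iteratedDeriv k (oneSubSqRpow (k + α)) x| * Gamma (1 / 2)
        * Gamma (↑(k / 2) + 1 / 2 + (α + 1 / 2))
      ≤ 2 ^ k * Gamma (↑(k / 2) + 1 / 2) * Gamma (k + α + 1) := by
  have hIoo : ∀ x ∈ Ioo (-1 : ℝ) 1, |iteratedDeriv k (oneSubSqRpow (k + α)) x|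
      * Gamma (1 / 2) * Gamma (↑(k / 2) + 1 / 2 + (α + 1 / 2))
        ≤ 2 ^ k * Gamma (↑(k / 2) + 1 / 2) * Gamma (k + α + 1) := by
    intro x hx
    obtain ⟨m, rfl | rfl⟩ := Nat.even_or_odd' k
    · rw [Nat.mul_div_cancel_left m two_pos]
      exact abs_iteratedDeriv_even_mul_Gamma_le m hα hx
    · rw [show (2 * m + 1) / 2 = m by omega]
      exact abs_iteratedDeriv_odd_mul_Gamma_le m hα hx
  have hv := continuous_iteratedDeriv (k + α) (k := k) (by linarith)
  rw [← closure_Ioo (by norm_num : (-1 : ℝ) ≠ 1)] at hx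
  exact le_on_closure hIoo (by fun_prop) continuousOn_const hx

theorem abs_iteratedDeriv_div_le {k : ℕ} (hk : 1 ≤ k) {α : ℝ} (hα : 1 / 2 ≤ α) {x : ℝ}
    (hx : x ∈ Icc (-1 : ℝ) 1) :
    |iteratedDeriv k (oneSubSqRpow (k + α)) x / (2 ^ k * Gamma (k + α + 1))|
      ≤ 2 * 2 ^ (α + 1 / 2) / Gamma (1 / 2) * (k : ℝ) ^ (-(α + 1 / 2)) := by
  set A := |iteratedDeriv k (oneSubSqRpow (k + α)) x|
  set y : ℝ := ↑(k / 2) + 1 / 2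
  set δ := α + 1 / 2 with hδ
  have hδ₀ : 0 ≤ δ := by rw [hδ]; linarith
  have hk₀ : (0 : ℝ) < k := by exact_mod_cast hk
  have hy : 1 / 4 ≤ y := by simp only [y]; linarith [(k / 2).cast_nonneg (α := ℝ)]
  have hky : (k : ℝ) ≤ 2 * y := by
    have : (k : ℝ) ≤ 2 * (k / 2 : ℕ) + 1 := by exact_mod_cast (by omega : k ≤ 2 * (k / 2) + 1)
    simp only [y]; linarith
  have hΓ₁ : 0 < Gamma (1 / 2) := Gamma_pos_of_pos (by norm_num)
  have hΓ₂ : 0 < Gamma (y + δ) := Gamma_pos_of_pos (by positivity)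
  have hD : 0 < 2 ^ k * Gamma (k + α + 1) := by
    have := Gamma_pos_of_pos (show 0 < (k : ℝ) + α + 1 by linarith)
    positivity
  have hAy : A * Gamma (1 / 2) * y ^ δ ≤ 2 * (2 ^ k * Gamma (k + α + 1)) := by
    refine le_of_mul_le_mul_right ?_ hΓ₂
    calc A * Gamma (1 / 2) * y ^ δ * Gamma (y + δ)
        = A * Gamma (1 / 2) * Gamma (y + δ) * y ^ δ := by ring
      _ ≤ 2 ^ k * Gamma y * Gamma (k + α + 1) * y ^ δ :=
        mul_le_mul_of_nonneg_right (oneSubSqRpow.abs_iteratedDeriv_mul_Gamma_le k hα hx)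
          (by positivity)
      _ = 2 ^ k * Gamma (k + α + 1) * (Gamma y * y ^ δ) := by ring
      _ ≤ 2 ^ k * Gamma (k + α + 1) * (2 * Gamma (y + δ)) :=
        mul_le_mul_of_nonneg_left (Gamma_mul_rpow_le_two_mul_Gamma_add hy hδ₀) hD.le
      _ = 2 * (2 ^ k * Gamma (k + α + 1)) * Gamma (y + δ) := by ring
  have hky' : (k : ℝ) ^ δ ≤ 2 ^ δ * y ^ δ := by
    rw [← Real.mul_rpow (by norm_num) (by positivity)]
    exact Real.rpow_le_rpow hk₀.le hky (by positivity)
  rw [abs_div, abs_of_pos hD, div_le_iff₀ hD, Real.rpow_neg hk₀.le]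
  rw [show 2 * 2 ^ δ / Gamma (1 / 2) * ((k : ℝ) ^ δ)⁻¹ * (2 ^ k * Gamma (k + α + 1))
      = 2 ^ δ * (2 * (2 ^ k * Gamma (k + α + 1))) / (Gamma (1 / 2) * (k : ℝ) ^ δ) by
      field_simp, le_div_iff₀ (by positivity)]
  calc A * (Gamma (1 / 2) * (k : ℝ) ^ δ) ≤ A * (Gamma (1 / 2) * (2 ^ δ * y ^ δ)) := by
        gcongr
    _ = 2 ^ δ * (A * Gamma (1 / 2) * y ^ δ) := by ring
    _ ≤ 2 ^ δ * (2 * (2 ^ k * Gamma (k + α + 1))) := by gcongr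

end oneSubSqRpow

/-- **Uniform bound for `Q_k`, dimension `n ≥ 4`.**
Let `n ≥ 4` and `Q_k(x) = ∂_x^k((1-x²)^{k+(n-3)/2}) / (2^k Γ(k+(n-1)/2))` for `k ≥ 1`.
Then there is a constant `C` (independent of `k` and `x`) with
`|Q_k(x)| ≤ C k^{1-n/2}` for all `x ∈ [-1,1]`. -/
theorem Qk_bound_dim_ge_four (n : ℕ) (hn : 4 ≤ n) :
    ∃ C > 0, ∀ (k : ℕ), 1 ≤ k → ∀ x ∈ Icc (-1 : ℝ) 1,
      |iteratedDeriv k (fun y : ℝ => (1 - y ^ 2) ^ ((k : ℝ) + ((n : ℝ) - 3) / 2)) x /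
          (2 ^ k * Real.Gamma ((k : ℝ) + ((n : ℝ) - 1) / 2))|
        ≤ C * (k : ℝ) ^ (1 - (n : ℝ) / 2) := by
  have hα : 1 / 2 ≤ ((n : ℝ) - 3) / 2 := by
    have : (4 : ℝ) ≤ n := by exact_mod_cast hn
    linarith
  refine ⟨2 * 2 ^ (((n : ℝ) - 3) / 2 + 1 / 2) / Real.Gamma (1 / 2),
    by positivity, fun k hk x hx => ?_⟩
  rw [show (k : ℝ) + ((n : ℝ) - 1) / 2 = k + ((n : ℝ) - 3) / 2 + 1 by ring,
    show 1 - (n : ℝ) / 2 = -(((n : ℝ) - 3) / 2 + 1 / 2) by ring]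
  exact oneSubSqRpow.abs_iteratedDeriv_div_le hk hα hx
end
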